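/- Let $V$ be a random subspace uniformly distributed on $\mathcal{G}_{k,d}(\mathbb{R})$ and $x \in S^{d-1}$. Then $\mathbb{E}\big(\tfrac{d^2}{k}\,\|P_V(x)\|^2\, P_V\big) = a P_x + b I$, where $a = \frac{2d(d-k)}{(d+2)(d-1)}$ and $b = \frac{d(kd+k-2)}{(d+2)(d-1)}$. -/

import Mathlib

/-!
The map `G x = 𝔼 (⟪x, P x⟫ P)` is equivariant: `G (U x) = U (G x) Uᵀ` for orthogonal `U`.
Householder reflections fixing `e₀` force `G e₀ = α I + δ e₀ e₀ᵀ`, and the reflection carrying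
`‖x‖ e₀` to `x` then gives `G x = α ‖x‖² I + δ x xᵀ` for all `x`. Two linear equations fix `α`
and `δ`: the trace of `G eₐ` is `k 𝔼 Pₐₐ` and `∑ₐ Pₐₐ = k`; and, since `P² = P`,
`𝔼 P₀₀ = ∑_b 𝔼 P₀_b²`, where each `𝔼 P₀_b²` is read off `G` by polarisation at `e₀ + e_b`.
-/

open Matrix MeasureTheory

noncomputable section

instance matrixMeasurableSpace (m n : Type*) : MeasurableSpace (Matrix m n ℝ) :=
  MeasurableSpace.pi (X := fun _ : m => n → ℝ)

/-- `P` is the orthogonal projection matrix onto a `k`-dimensional subspace of `ℝ^d`. -/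
def IsProjOfDim (k d : ℕ) (P : Matrix (Fin d) (Fin d) ℝ) : Prop :=
  P.IsSymm ∧ P * P = P ∧ P.trace = (k : ℝ)

/-- `σ` is the invariant probability measure `σ_k` on the Grassmannian `G_{k,d}(ℝ)`,
realized as a measure on orthogonal projection matrices of rank `k`, invariant under
conjugation by orthogonal matrices. -/
def IsGrassmannUniform (k d : ℕ) (σ : Measure (Matrix (Fin d) (Fin d) ℝ)) : Prop :=
  IsProbabilityMeasure σ ∧ (∀ᵐ P ∂σ, IsProjOfDim k d P) ∧
    ∀ U ∈ Matrix.orthogonalGroup (Fin d) ℝ,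
      Measure.map (fun P => U * P * Uᵀ) σ = σ

/-- The rank-one orthogonal projector `P_x = x x^*` onto the line spanned by `x`. -/
def outerP (d : ℕ) (x : EuclideanSpace ℝ (Fin d)) : Matrix (Fin d) (Fin d) ℝ :=
  Matrix.vecMulVec ((WithLp.equiv 2 (Fin d → ℝ)) x) ((WithLp.equiv 2 (Fin d → ℝ)) x)

instance Matrix.borelSpace (m n : Type*) [Countable m] [Countable n] :
    BorelSpace (Matrix m n ℝ) :=
  inferInstanceAs (BorelSpace (m → n → ℝ))

namespace Matrix

variable {n : Type*} [Fintype n] [DecidableEq n]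

lemma conj_smul_one_add_smul_vecMulVec {U : Matrix n n ℝ} (hU : U ∈ orthogonalGroup n ℝ)
    (c δ : ℝ) (v : n → ℝ) :
    U * (c • 1 + δ • vecMulVec v v) * Uᵀ = c • 1 + δ • vecMulVec (U *ᵥ v) (U *ᵥ v) := by
  simp [mul_add, add_mul, mul_vecMulVec, vecMulVec_mul, vecMul_transpose,
    (mem_orthogonalGroup_iff _ _).mp hU]

/-- Reflection in the hyperplane orthogonal to `w`; `w = 0` gives `1`, since `2 / 0 = 0`. -/
def householder (w : n → ℝ) : Matrix n n ℝ := 1 - (2 / (w ⬝ᵥ w)) • vecMulVec w w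

lemma householder_transpose (w : n → ℝ) : (householder w)ᵀ = householder w := by
  simp [householder, transpose_vecMulVec]

lemma householder_mulVec (w v : n → ℝ) :
    householder w *ᵥ v = v - (2 / (w ⬝ᵥ w) * (w ⬝ᵥ v)) • w := by
  simp [householder, sub_mulVec, smul_mulVec, vecMulVec_mulVec, smul_smul]

lemma householder_mul_self (w : n → ℝ) : householder w * householder w = 1 := by
  have hc : (2 / (w ⬝ᵥ w)) * ((2 / (w ⬝ᵥ w)) * (w ⬝ᵥ w)) = 2 * (2 / (w ⬝ᵥ w)) := by
    rcases eq_or_ne (w ⬝ᵥ w) 0 with h | h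
    · simp [h]
    · field_simp
  simp only [householder, sub_mul, mul_sub, one_mul, mul_one, smul_mul_smul_comm,
    vecMulVec_mul_vecMulVec, vecMulVec_smul]
  linear_combination (norm := module) hc • vecMulVec w w

lemma householder_mem_orthogonalGroup (w : n → ℝ) : householder w ∈ orthogonalGroup n ℝ := by
  rw [mem_orthogonalGroup_iff, householder_transpose, householder_mul_self]

lemma householder_mulVec_of_dotProduct_eq_zero {w v : n → ℝ} (h : w ⬝ᵥ v = 0) :
    householder w *ᵥ v = v := by
  simp [householder_mulVec, h]

lemma householder_mulVec_self {w : n → ℝ} (hw : w ≠ 0) : householder w *ᵥ w = -w := by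
  have : w ⬝ᵥ w ≠ 0 := by simpa [dotProduct_self_eq_zero] using hw
  rw [householder_mulVec, div_mul_cancel₀ _ this]
  module

lemma householder_sub_mulVec {u v : n → ℝ} (h : u ⬝ᵥ u = v ⬝ᵥ v) :
    householder (u - v) *ᵥ u = v := by
  have hw : (u - v) ⬝ᵥ (u - v) = 2 * ((u - v) ⬝ᵥ u) := by
    simp only [sub_dotProduct, dotProduct_sub, dotProduct_comm v u]
    linarith
  rcases eq_or_ne ((u - v) ⬝ᵥ u) 0 with h0 | h0
  · rw [h0, mul_zero, dotProduct_self_eq_zero, sub_eq_zero] at hw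
    simp [householder_mulVec, hw]
  · rw [householder_mulVec, hw, show 2 / (2 * ((u - v) ⬝ᵥ u)) * ((u - v) ⬝ᵥ u) = 1 by field_simp,
      one_smul, sub_sub_cancel]

lemma householder_conj_apply (w : n → ℝ) (M : Matrix n n ℝ) (a b : n) :
    (householder w * M * (householder w)ᵀ) a b =
      (householder w *ᵥ Pi.single a 1) ⬝ᵥ M *ᵥ (householder w *ᵥ Pi.single b 1) := by
  simp only [mul_mul_apply, transpose_transpose, mulVec_single_one]
  have hcol : ∀ c, (householder w).col c = householder w c := fun c =>
    funext fun i => congrFun (congrFun (householder_transpose w) c) i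
  rw [hcol, hcol]

end Matrix

namespace IsProjOfDim

variable {k d : ℕ} {P : Matrix (Fin d) (Fin d) ℝ}

lemma apply_comm (hP : IsProjOfDim k d P) (i j : Fin d) : P j i = P i j :=
  congrFun (congrFun hP.1 i) j

lemma sum_apply_sq (hP : IsProjOfDim k d P) (i : Fin d) : ∑ b, P i b ^ 2 = P i i := by
  conv_rhs => rw [← hP.2.1, mul_apply]
  simp_rw [hP.apply_comm i, sq]

lemma abs_apply_le_one (hP : IsProjOfDim k d P) (i j : Fin d) : |P i j| ≤ 1 := by
  have hle : ∀ b, P i b ^ 2 ≤ P i i := fun b =>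
    hP.sum_apply_sq i ▸ Finset.single_le_sum (fun b _ => sq_nonneg (P i b)) (Finset.mem_univ b)
  have hii : P i i ≤ 1 := by nlinarith [hle i]
  exact abs_le_one_iff_mul_self_le_one.mpr (by nlinarith [hle j])

lemma mulVec_dotProduct_mulVec (hP : IsProjOfDim k d P) (v : Fin d → ℝ) :
    (P *ᵥ v) ⬝ᵥ (P *ᵥ v) = v ⬝ᵥ P *ᵥ v := by
  rw [dotProduct_mulVec, ← vecMul_transpose, hP.1, vecMul_vecMul, hP.2.1, dotProduct_comm]

lemma sq_norm_toEuclideanLin (hP : IsProjOfDim k d P) (x : EuclideanSpace ℝ (Fin d)) :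
    ‖toEuclideanLin P x‖ ^ 2 = x.ofLp ⬝ᵥ P *ᵥ x.ofLp := by
  rw [← hP.mulVec_dotProduct_mulVec, EuclideanSpace.norm_sq_eq]
  simp [dotProduct, sq]

end IsProjOfDim

def momentMatrix {d : ℕ} (σ : Measure (Matrix (Fin d) (Fin d) ℝ)) (x : Fin d → ℝ) :
    Matrix (Fin d) (Fin d) ℝ :=
  Matrix.of fun i j => ∫ P, (x ⬝ᵥ P *ᵥ x) * P i j ∂σ

lemma momentMatrix_smul {d : ℕ} (σ : Measure (Matrix (Fin d) (Fin d) ℝ)) (c : ℝ) (x : Fin d → ℝ) :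
    momentMatrix σ (c • x) = c ^ 2 • momentMatrix σ x := by
  ext i j
  simp only [momentMatrix, of_apply, Matrix.smul_apply, smul_eq_mul, mulVec_smul, smul_dotProduct,
    dotProduct_smul, ← integral_const_mul]
  congr 1
  funext P
  ring

namespace IsGrassmannUniform

variable {k d : ℕ} {σ : Measure (Matrix (Fin d) (Fin d) ℝ)}

lemma integrable_of_continuous (hσ : IsGrassmannUniform k d σ)
    {f : Matrix (Fin d) (Fin d) ℝ → ℝ} (hf : Continuous f) : Integrable f σ := by
  have := hσ.1
  obtain ⟨C, hC⟩ := (isCompact_univ_pi fun _ => isCompact_univ_pi fun _ => isCompact_Icc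
    (a := (-1 : ℝ)) (b := 1)).exists_bound_of_continuousOn hf.continuousOn
  refine Integrable.mono' (integrable_const C) hf.aestronglyMeasurable ?_
  filter_upwards [hσ.2.1] with P hP
  exact hC P fun i _ j _ => abs_le.mp (hP.abs_apply_le_one i j)

lemma integral_comp_conj (hσ : IsGrassmannUniform k d σ) {U : Matrix (Fin d) (Fin d) ℝ}
    (hU : U ∈ orthogonalGroup (Fin d) ℝ) (f : Matrix (Fin d) (Fin d) ℝ → ℝ) :
    ∫ P, f (U * P * Uᵀ) ∂σ = ∫ P, f P ∂σ := by
  have hU' := (mem_orthogonalGroup_iff' _ _).mp hU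
  have hU'' := (mem_orthogonalGroup_iff _ _).mp hU
  let e : Matrix (Fin d) (Fin d) ℝ ≃ᵐ Matrix (Fin d) (Fin d) ℝ :=
    { toFun := fun P => U * P * Uᵀ
      invFun := fun P => Uᵀ * P * U
      left_inv := fun P => by
        simp only [← Matrix.mul_assoc, hU', Matrix.one_mul]
        simp only [Matrix.mul_assoc, hU', Matrix.mul_one]
      right_inv := fun P => by
        simp only [← Matrix.mul_assoc, hU'', Matrix.one_mul]
        simp only [Matrix.mul_assoc, hU'', Matrix.mul_one]
      measurable_toFun := (by fun_prop : Continuous fun P => U * P * Uᵀ).measurable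
      measurable_invFun := (by fun_prop : Continuous fun P => Uᵀ * P * U).measurable }
  conv_rhs => rw [← hσ.2.2 U hU]
  exact (integral_map_equiv e f).symm

lemma momentMatrix_mulVec (hσ : IsGrassmannUniform k d σ) {U : Matrix (Fin d) (Fin d) ℝ}
    (hU : U ∈ orthogonalGroup (Fin d) ℝ) (x : Fin d → ℝ) :
    momentMatrix σ (U *ᵥ x) = U * momentMatrix σ x * Uᵀ := by
  have hUU : U * Uᵀ = 1 := (mem_orthogonalGroup_iff _ _).mp hU
  ext i j
  have hconj : ∀ P : Matrix (Fin d) (Fin d) ℝ, ((U *ᵥ x) ⬝ᵥ P *ᵥ (U *ᵥ x)) * P i j =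
      (x ⬝ᵥ (Uᵀ * P * Uᵀᵀ) *ᵥ x) * (U * (Uᵀ * P * Uᵀᵀ) * Uᵀ) i j := by
    intro P
    simp only [transpose_transpose, ← mulVec_mulVec, dotProduct_mulVec, vecMul_transpose,
      ← Matrix.mul_assoc, hUU, Matrix.one_mul]
    simp only [Matrix.mul_assoc, hUU, Matrix.mul_one]
  have hint : ∀ a b, Integrable
      (fun P : Matrix (Fin d) (Fin d) ℝ => U i a * ((x ⬝ᵥ P *ᵥ x) * P a b) * U j b) σ :=
    fun a b => hσ.integrable_of_continuous (by fun_prop)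
  calc ∫ P, ((U *ᵥ x) ⬝ᵥ P *ᵥ (U *ᵥ x)) * P i j ∂σ
      = ∫ P, (x ⬝ᵥ P *ᵥ x) * (U * P * Uᵀ) i j ∂σ := by
        simp_rw [hconj]
        exact hσ.integral_comp_conj (transpose_mem_unitaryGroup_iff.mpr hU)
          fun Q => (x ⬝ᵥ Q *ᵥ x) * (U * Q * Uᵀ) i j
    _ = ∫ P, ∑ b, ∑ a, U i a * ((x ⬝ᵥ P *ᵥ x) * P a b) * U j b ∂σ := by
        congr 1
        funext P
        simp only [mul_apply, transpose_apply, Finset.mul_sum, Finset.sum_mul]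
        exact Finset.sum_congr rfl fun b _ => Finset.sum_congr rfl fun a _ => by ring
    _ = ∑ b, ∑ a, U i a * momentMatrix σ x a b * U j b := by
        rw [integral_finsetSum _ fun b _ => integrable_finsetSum _ fun a _ => hint a b]
        refine Finset.sum_congr rfl fun b _ => ?_
        rw [integral_finsetSum _ fun a _ => hint a b]
        refine Finset.sum_congr rfl fun a _ => ?_
        rw [integral_mul_const, integral_const_mul]
        rfl
    _ = (U * momentMatrix σ x * Uᵀ) i j := by
        simp [mul_apply, Finset.sum_mul]

lemma momentMatrix_apply_eq_of_dotProduct_eq_zero (hσ : IsGrassmannUniform k d σ)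
    {w x : Fin d → ℝ} (hwx : w ⬝ᵥ x = 0) (a b : Fin d) :
    momentMatrix σ x a b = (householder w *ᵥ Pi.single a 1) ⬝ᵥ
      momentMatrix σ x *ᵥ (householder w *ᵥ Pi.single b 1) := by
  conv_lhs => rw [← householder_mulVec_of_dotProduct_eq_zero hwx,
    hσ.momentMatrix_mulVec (householder_mem_orthogonalGroup w), householder_conj_apply]

lemma momentMatrix_single_apply_of_ne (hσ : IsGrassmannUniform k d σ) (o : Fin d)
    {a b : Fin d} (hab : a ≠ b) : momentMatrix σ (Pi.single o 1) a b = 0 := by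
  have hreflect : ∀ {s t : Fin d}, t ≠ o → s ≠ t →
      momentMatrix σ (Pi.single o 1) s t = 0 ∧ momentMatrix σ (Pi.single o 1) t s = 0 := by
    intro s t hto hst
    have hwx : Pi.single t (1 : ℝ) ⬝ᵥ Pi.single o 1 = 0 := by simp [hto]
    have ht : householder (Pi.single t (1 : ℝ)) *ᵥ Pi.single t 1 = -Pi.single t 1 :=
      householder_mulVec_self (by simp)
    have hs : householder (Pi.single t (1 : ℝ)) *ᵥ Pi.single s 1 = Pi.single s 1 :=
      householder_mulVec_of_dotProduct_eq_zero (by simp [hst.symm])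
    have h₁ := hσ.momentMatrix_apply_eq_of_dotProduct_eq_zero hwx s t
    have h₂ := hσ.momentMatrix_apply_eq_of_dotProduct_eq_zero hwx t s
    rw [ht, hs] at h₁ h₂
    simp only [mulVec_neg, mulVec_single, MulOpposite.op_one, one_smul, dotProduct_neg,
      single_dotProduct, col_apply, one_mul, neg_dotProduct] at h₁ h₂
    constructor <;> linarith
  by_cases hbo : b = o
  · exact (hreflect (hbo ▸ hab) hab.symm).2
  · exact (hreflect hbo hab).1

lemma momentMatrix_single_apply_self (hσ : IsGrassmannUniform k d σ) {o a b : Fin d}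
    (hao : a ≠ o) (hbo : b ≠ o) :
    momentMatrix σ (Pi.single o 1) a a = momentMatrix σ (Pi.single o 1) b b := by
  have hwx : (Pi.single a 1 - Pi.single b 1 : Fin d → ℝ) ⬝ᵥ Pi.single o 1 = 0 := by
    simp [hao, hbo]
  have hab : householder (Pi.single a 1 - Pi.single b 1 : Fin d → ℝ) *ᵥ Pi.single a 1 =
      Pi.single b 1 :=
    householder_sub_mulVec (by simp)
  simpa [hab] using hσ.momentMatrix_apply_eq_of_dotProduct_eq_zero hwx a a

lemma exists_momentMatrix_single_eq (hσ : IsGrassmannUniform k d σ) {o t : Fin d}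
    (hot : o ≠ t) : ∃ α δ : ℝ,
      momentMatrix σ (Pi.single o 1) = α • 1 + δ • vecMulVec (Pi.single o 1) (Pi.single o 1) := by
  refine ⟨momentMatrix σ (Pi.single o 1) t t,
    momentMatrix σ (Pi.single o 1) o o - momentMatrix σ (Pi.single o 1) t t, ?_⟩
  ext a b
  rcases eq_or_ne a b with rfl | hab
  · rcases eq_or_ne a o with rfl | hao
    · simp [vecMulVec_apply]
    · simp [hao, vecMulVec_apply, hσ.momentMatrix_single_apply_self hao hot.symm]
  · have : a ≠ o ∨ b ≠ o := by grind
    rcases this with h | h <;>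
      simp [h, hab, vecMulVec_apply, one_apply_ne, hσ.momentMatrix_single_apply_of_ne o hab]

theorem exists_momentMatrix_eq (hσ : IsGrassmannUniform k d σ) (hd : 1 < d) :
    ∃ α δ : ℝ, ∀ x, momentMatrix σ x = (α * (x ⬝ᵥ x)) • 1 + δ • vecMulVec x x := by
  set o : Fin d := ⟨0, by omega⟩
  obtain ⟨α, δ, hG⟩ := hσ.exists_momentMatrix_single_eq (t := ⟨1, hd⟩) (o := o)
    (by simp [o, Fin.ext_iff])
  refine ⟨α, δ, fun x => ?_⟩
  set r := √(x ⬝ᵥ x)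
  have hr : r ^ 2 = x ⬝ᵥ x := Real.sq_sqrt (Finset.sum_nonneg fun i _ => mul_self_nonneg (x i))
  have hv : (r • Pi.single o 1) ⬝ᵥ (r • Pi.single o 1) = x ⬝ᵥ x := by
    simp [← hr, sq]
  set H := householder (r • Pi.single o 1 - x)
  calc momentMatrix σ x = momentMatrix σ (H *ᵥ (r • Pi.single o 1)) := by
        rw [householder_sub_mulVec hv]
    _ = H * ((α * (x ⬝ᵥ x)) • 1 + δ • vecMulVec (r • Pi.single o 1) (r • Pi.single o 1)) * Hᵀ := by
        rw [hσ.momentMatrix_mulVec (householder_mem_orthogonalGroup _), momentMatrix_smul, hG, ← hr]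
        congr 2
        simp only [smul_vecMulVec, vecMulVec_smul]
        module
    _ = _ := by
        rw [conj_smul_one_add_smul_vecMulVec (householder_mem_orthogonalGroup _),
          householder_sub_mulVec hv]

lemma trace_momentMatrix (hσ : IsGrassmannUniform k d σ) (x : Fin d → ℝ) :
    (momentMatrix σ x).trace = k * ∫ P, x ⬝ᵥ P *ᵥ x ∂σ := by
  simp only [trace, diag, momentMatrix, of_apply]
  rw [← integral_finsetSum _ fun i _ => hσ.integrable_of_continuous (by fun_prop),
    ← integral_const_mul]
  refine integral_congr_ae ?_
  filter_upwards [hσ.2.1] with P hP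
  have htr : ∑ i, P i i = k := hP.2.2
  rw [← Finset.mul_sum, htr, mul_comm]

variable {α δ : ℝ}

lemma mul_integral_dotProduct_mulVec (hσ : IsGrassmannUniform k d σ)
    (hG : ∀ x, momentMatrix σ x = (α * (x ⬝ᵥ x)) • 1 + δ • vecMulVec x x) (x : Fin d → ℝ) :
    k * ∫ P, x ⬝ᵥ P *ᵥ x ∂σ = (d * α + δ) * (x ⬝ᵥ x) := by
  rw [← hσ.trace_momentMatrix, hG]
  simp only [trace_add, trace_smul, trace_one, Fintype.card_fin, smul_eq_mul, trace_vecMulVec]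
  ring

lemma rank_sq_eq (hσ : IsGrassmannUniform k d σ)
    (hG : ∀ x, momentMatrix σ x = (α * (x ⬝ᵥ x)) • 1 + δ • vecMulVec x x) :
    (k : ℝ) ^ 2 = d * (d * α + δ) := by
  have := hσ.1
  have hdiag : ∀ a, k * ∫ P, P a a ∂σ = d * α + δ := fun a => by
    simpa using hσ.mul_integral_dotProduct_mulVec hG (Pi.single a 1)
  calc (k : ℝ) ^ 2 = k * ∫ P, P.trace ∂σ := by
        rw [integral_congr_ae (hσ.2.1.mono fun P hP => hP.2.2)]
        simp [sq]
    _ = ∑ a, k * ∫ P, P a a ∂σ := by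
        rw [← Finset.mul_sum, ← integral_finsetSum _ fun a _ =>
          hσ.integrable_of_continuous (by fun_prop)]
        rfl
    _ = d * (d * α + δ) := by
        simp only [hdiag, Finset.sum_const, Finset.card_univ, Fintype.card_fin, nsmul_eq_mul]

lemma two_mul_integral_apply_sq (hσ : IsGrassmannUniform k d σ)
    (hG : ∀ x, momentMatrix σ x = (α * (x ⬝ᵥ x)) • 1 + δ • vecMulVec x x) (a b : Fin d) :
    2 * ∫ P, P a b ^ 2 ∂σ = if a = b then 2 * (α + δ) else δ := by
  set u : Fin d → ℝ := Pi.single a 1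
  set v : Fin d → ℝ := Pi.single b 1
  have hpol : 2 * ∫ P, P a b ^ 2 ∂σ =
      momentMatrix σ (u + v) a b - momentMatrix σ u a b - momentMatrix σ v a b := by
    calc 2 * ∫ P, P a b ^ 2 ∂σ = ∫ P, ((u + v) ⬝ᵥ P *ᵥ (u + v)) * P a b -
          (u ⬝ᵥ P *ᵥ u) * P a b - (v ⬝ᵥ P *ᵥ v) * P a b ∂σ := by
          rw [← integral_const_mul]
          refine integral_congr_ae ?_
          filter_upwards [hσ.2.1] with P hP
          simp only [u, v, mulVec_add, mulVec_single, MulOpposite.op_one, one_smul, dotProduct_add,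
            add_dotProduct, single_dotProduct, col_apply, one_mul, hP.apply_comm a b]
          ring
      _ = _ := by
          rw [integral_sub, integral_sub]
          · rfl
          all_goals exact hσ.integrable_of_continuous (by fun_prop)
  rw [hpol, hG, hG, hG]
  by_cases hab : a = b
  · subst hab
    simp only [u, v, dotProduct_add, dotProduct_single, Pi.add_apply, Pi.single_eq_same, mul_one,
      Matrix.add_apply, Matrix.smul_apply, one_apply_eq, smul_eq_mul, vecMulVec_apply, ↓reduceIte]
    ring
  · simp [u, v, hab, vecMulVec_apply, Ne.symm hab]

lemma rank_mul_eq (hσ : IsGrassmannUniform k d σ)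
    (hG : ∀ x, momentMatrix σ x = (α * (x ⬝ᵥ x)) • 1 + δ • vecMulVec x x) (o : Fin d) :
    k * (2 * α + (d + 1) * δ) = 2 * (d * α + δ) := by
  have hdiag : k * ∫ P, P o o ∂σ = d * α + δ := by
    simpa using hσ.mul_integral_dotProduct_mulVec hG (Pi.single o 1)
  have hrow : 2 * ∫ P, P o o ∂σ = ∑ b, 2 * ∫ P, P o b ^ 2 ∂σ := by
    rw [← Finset.mul_sum, ← integral_finsetSum _ fun b _ =>
      hσ.integrable_of_continuous (by fun_prop)]
    congr 1
    exact integral_congr_ae (hσ.2.1.mono fun P hP => (hP.sum_apply_sq o).symm)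
  have hsum : ∑ b, (if o = b then 2 * (α + δ) else δ) = 2 * (α + δ) + (d - 1) * δ := by
    rw [Finset.sum_ite]
    simp [Finset.filter_eq, Finset.filter_ne, Nat.cast_pred o.pos]
  simp only [hσ.two_mul_integral_apply_sq hG, hsum] at hrow
  linear_combination 2 * hdiag - k * hrow

end IsGrassmannUniform

lemma sq_div_mul_coeffs_eq {k d α δ : ℝ} (hk : k ≠ 0) (hd : 1 < d)
    (hsq : k ^ 2 = d * (d * α + δ)) (hmul : k * (2 * α + (d + 1) * δ) = 2 * (d * α + δ)) :
    d ^ 2 / k * δ = 2 * d * (d - k) / ((d + 2) * (d - 1)) ∧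
      d ^ 2 / k * α = d * (k * d + k - 2) / ((d + 2) * (d - 1)) := by
  have hd1 : d - 1 ≠ 0 := by linarith
  have hd2 : d + 2 ≠ 0 := by linarith
  have hδ : k * (d * (d + 2) * (d - 1) * δ - 2 * k * (d - k)) = 0 := by
    linear_combination (-2 * (d - k)) * hsq + d ^ 2 * hmul
  have hα : k * (d * (d + 2) * (d - 1) * α - k * (k * d + k - 2)) = 0 := by
    linear_combination (-(k * (d + 1) - 2)) * hsq - d * hmul
  constructor
  · rw [div_mul_eq_mul_div, div_eq_div_iff hk (mul_ne_zero hd2 hd1)]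
    linear_combination d * (mul_eq_zero.mp hδ).resolve_left hk
  · rw [div_mul_eq_mul_div, div_eq_div_iff hk (mul_ne_zero hd2 hd1)]
    linear_combination d * (mul_eq_zero.mp hα).resolve_left hk

/-- For a uniformly random `k`-dimensional subspace `V` of `ℝ^d` and a unit vector `x`,
`𝔼 ((d²/k) ‖P_V x‖² P_V) = a P_x + b I` (entrywise), with `a = 2d(d-k)/((d+2)(d-1))` and
`b = d(kd+k-2)/((d+2)(d-1))`. -/
theorem grassmann_weighted_projection_mean (d k : ℕ) (hk : 1 ≤ k) (hkd : k < d)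
    (σ : Measure (Matrix (Fin d) (Fin d) ℝ)) (hσ : IsGrassmannUniform k d σ)
    (x : EuclideanSpace ℝ (Fin d)) (hx : ‖x‖ = 1) :
    ∀ i j : Fin d,
      ∫ P, ((d : ℝ) ^ 2 / k * ‖Matrix.toEuclideanLin P x‖ ^ 2) * P i j ∂σ =
        ((2 * (d : ℝ) * (d - k) / ((d + 2) * (d - 1))) • outerP d x +
          ((d : ℝ) * ((k : ℝ) * d + k - 2) / ((d + 2) * (d - 1))) •
            (1 : Matrix (Fin d) (Fin d) ℝ)) i j := by
  intro i j
  obtain ⟨α, δ, hG⟩ := hσ.exists_momentMatrix_eq (by omega)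
  obtain ⟨hδ, hα⟩ := sq_div_mul_coeffs_eq (by exact_mod_cast (show k ≠ 0 by omega))
    (by exact_mod_cast (show 1 < d by omega)) (hσ.rank_sq_eq hG) (hσ.rank_mul_eq hG ⟨0, by omega⟩)
  have hv : x.ofLp ⬝ᵥ x.ofLp = 1 := by
    simpa [dotProduct, ← sq, hx] using (EuclideanSpace.real_norm_sq_eq x).symm
  have hmean : ∫ P, ((d : ℝ) ^ 2 / k * ‖Matrix.toEuclideanLin P x‖ ^ 2) * P i j ∂σ =
      (d : ℝ) ^ 2 / k * momentMatrix σ x.ofLp i j := by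
    rw [momentMatrix, of_apply, ← integral_const_mul]
    refine integral_congr_ae ?_
    filter_upwards [hσ.2.1] with P hP
    rw [hP.sq_norm_toEuclideanLin, mul_assoc]
  rw [hmean, hG, hv]
  simp only [outerP, WithLp.equiv_apply, Matrix.add_apply, Matrix.smul_apply, one_apply,
    smul_eq_mul, vecMulVec_apply, ← hδ, ← hα]
  split_ifs <;> ring
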